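/- arXiv:2312.13805 — 5 statements merged into one kernel-verified Lean document; each statement's English description precedes it below -/
import Mathlib

section
/- Let n > m ≥ 1 be coprime integers and x₀ = (m/n)^{1/(n−m)}. Let u > v be real numbers with u^n − u^m = v^n − v^m. Then v < x₀; moreover, if u ≥ 1 then v ≤ 0; and if n is odd and m is even then u ≤ 1. -/
open MeasureTheory Real Set Filter Asymptotics

noncomputable def lap (p : ℝ → ℝ) (l : ℝ) : ℝ :=
  ∫ x in Set.Ioi (0:ℝ), Real.exp (-l * x) * p x

def ExpOrder (p : ℝ → ℝ) : Prop :=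
  ∃ c > (0:ℝ), ∃ C > (0:ℝ), ∀ x ≥ (0:ℝ), |p x| ≤ C * Real.exp (c * x)

/-! The critical point `x₀ = (m/n)^(1/(n-m))` is where `x ↦ xⁿ - xᵐ` turns from decreasing to
increasing on `[0, ∞)`. Two solutions `v < u` of `uⁿ - uᵐ = vⁿ - vᵐ` cannot both lie in `[x₀, ∞)`,
so `v < x₀ < 1`. For `0 ≤ v < 1` and for negative `v` (when `n` is odd, `m` even) the value
`vⁿ - vᵐ` is `≤ 0`, resp. `< 0`, which excludes the corresponding sign of `uⁿ - uᵐ`. -/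

section CriticalPoint

variable {m n : ℕ}

lemma rpow_one_div_sub_pow_sub (hmn : m < n) :
    (((m : ℝ) / n) ^ ((1 : ℝ) / ((n : ℝ) - m))) ^ (n - m) = (m : ℝ) / n := by
  have hnm : ((n - m : ℕ) : ℝ) = (n : ℝ) - m := Nat.cast_sub hmn.le
  rw [← hnm, one_div]
  exact Real.rpow_inv_natCast_pow (by positivity) (by omega)

lemma rpow_one_div_sub_pos (hm : 1 ≤ m) (hmn : m < n) :
    0 < ((m : ℝ) / n) ^ ((1 : ℝ) / ((n : ℝ) - m)) := by
  have : (0 : ℝ) < m := by exact_mod_cast hm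
  have : (0 : ℝ) < n := by exact_mod_cast (show 0 < n by omega)
  positivity

lemma rpow_one_div_sub_lt_one (hmn : m < n) :
    ((m : ℝ) / n) ^ ((1 : ℝ) / ((n : ℝ) - m)) < 1 := by
  have hn : (0 : ℝ) < n := by exact_mod_cast (Nat.zero_le m).trans_lt hmn
  have hmn' : (m : ℝ) < n := by exact_mod_cast hmn
  exact Real.rpow_lt_one (by positivity) ((div_lt_one hn).mpr hmn')
    (one_div_pos.mpr (sub_pos.mpr hmn'))

lemma strictMonoOn_pow_sub_pow (hm : 1 ≤ m) (hmn : m < n) :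
    StrictMonoOn (fun x : ℝ ↦ x ^ n - x ^ m)
      (Ici (((m : ℝ) / n) ^ ((1 : ℝ) / ((n : ℝ) - m)))) := by
  set x₀ := ((m : ℝ) / n) ^ ((1 : ℝ) / ((n : ℝ) - m))
  have hx₀ : 0 < x₀ := rpow_one_div_sub_pos hm hmn
  have hn : (0 : ℝ) < n := by exact_mod_cast (show 0 < n by omega)
  refine strictMonoOn_of_deriv_pos (convex_Ici x₀)
    ((continuous_pow n).sub (continuous_pow m)).continuousOn fun x hx ↦ ?_
  rw [interior_Ici] at hx
  have hx0 : 0 < x := hx₀.trans hx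
  have hderiv : HasDerivAt (fun x : ℝ ↦ x ^ n - x ^ m) (n * x ^ (n - 1) - m * x ^ (m - 1)) x :=
    (hasDerivAt_pow n x).sub (hasDerivAt_pow m x)
  rw [hderiv.deriv]
  have hcrit : (m : ℝ) / n < x ^ (n - m) := by
    calc (m : ℝ) / n = x₀ ^ (n - m) := (rpow_one_div_sub_pow_sub hmn).symm
      _ < x ^ (n - m) := pow_lt_pow_left₀ hx hx₀.le (by omega)
  have hfactor : (n : ℝ) * x ^ (n - 1) - m * x ^ (m - 1)
      = x ^ (m - 1) * (n * x ^ (n - m) - m) := by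
    rw [mul_sub, ← mul_assoc, mul_comm _ (n : ℝ), mul_assoc, ← pow_add,
      show m - 1 + (n - m) = n - 1 by omega, mul_comm _ (m : ℝ)]
  rw [hfactor]
  have : (m : ℝ) < n * x ^ (n - m) := by rwa [div_lt_iff₀' hn] at hcrit
  exact mul_pos (pow_pos hx0 _) (sub_pos.mpr this)

lemma lt_rpow_one_div_sub_of_pow_sub_pow_eq (hm : 1 ≤ m) (hmn : m < n) {u v : ℝ}
    (huv : v < u) (h : u ^ n - u ^ m = v ^ n - v ^ m) :
    v < ((m : ℝ) / n) ^ ((1 : ℝ) / ((n : ℝ) - m)) := by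
  by_contra! hv
  exact (strictMonoOn_pow_sub_pow hm hmn hv (hv.trans huv.le) huv).ne h.symm

end CriticalPoint

theorem stmt8_general (n m : ℕ) (hm : 1 ≤ m) (hmn : m < n)
    (u v : ℝ) (huv : v < u) (h : u ^ n - u ^ m = v ^ n - v ^ m) :
    v < ((m : ℝ) / n) ^ ((1 : ℝ) / ((n : ℝ) - m)) ∧
      (1 ≤ u → v ≤ 0) ∧ (Odd n → Even m → u ≤ 1) := by
  have hv₀ := lt_rpow_one_div_sub_of_pow_sub_pow_eq hm hmn huv h
  have hv1 : v < 1 := hv₀.trans (rpow_one_div_sub_lt_one hmn)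
  refine ⟨hv₀, fun hu ↦ ?_, fun hn_odd hm_even ↦ ?_⟩
  · by_contra! hv
    have : u ^ m ≤ u ^ n := pow_le_pow_right₀ hu hmn.le
    have : v ^ n < v ^ m := pow_lt_pow_right_of_lt_one₀ hv hv1 hmn
    linarith
  · by_contra! hu
    have : u ^ m < u ^ n := pow_lt_pow_right₀ hu hmn
    rcases lt_or_ge v 0 with hv | hv
    · have : v ^ n < 0 := hn_odd.pow_neg hv
      have : 0 ≤ v ^ m := hm_even.pow_nonneg v
      linarith
    · have : v ^ n ≤ v ^ m := pow_le_pow_of_le_one hv hv1.le hmn.le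
      linarith

theorem stmt8 (n m : ℕ) (hm : 1 ≤ m) (hmn : m < n) (hcop : Nat.Coprime n m)
    (u v : ℝ) (huv : v < u) (h : u ^ n - u ^ m = v ^ n - v ^ m) :
    v < ((m : ℝ) / n) ^ ((1 : ℝ) / ((n : ℝ) - m)) ∧
      (1 ≤ u → v ≤ 0) ∧ (Odd n → Even m → u ≤ 1) :=
  stmt8_general n m hm hmn u v huv h
end

section
/- Let p(t) = t and q(t) = t − 2·1_{[1,∞)}(t) for t ≥ 0. Then for all λ > 0, ∫₀^∞ e^{-λt} p(t)² dt · ∫₀^∞ e^{-λt} q(t) dt = ∫₀^∞ e^{-λt} p(t) dt · ∫₀^∞ e^{-λt} q(t)² dt, even though p ≠ q. Thus H_{2,1} does not identify the càdlàg function p(t) = t. -/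
/-!
Everything is explicit. Writing `L f` for `lap f λ`, the Gamma integral gives `L tⁿ = n! / λⁿ⁺¹`,
and translation gives `L (1_{[a,∞)} g) = e^{-λa} L (g (· + a))`. Since `q = t - 2·1_{[1,∞)}` and
`q² = t² - 4 (t - 1)·1_{[1,∞)}`, this yields `L q = 1/λ² - 2e^{-λ}/λ` and
`L q² = 2/λ³ - 4e^{-λ}/λ²`, so both products equal `2/λ⁵ - 4e^{-λ}/λ⁴`.
-/

open MeasureTheory Real Set Filter Asymptotics

section Translation

variable {E : Type*} [NormedAddCommGroup E]

theorem integrableOn_Ioi_comp_add_iff (f : ℝ → E) (a : ℝ) :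
    IntegrableOn (fun x => f (x + a)) (Ioi 0) ↔ IntegrableOn f (Ioi a) := by
  have h := (measurePreserving_add_right volume a).integrableOn_comp_preimage
    (measurableEmbedding_addRight a) (f := f) (s := Ioi a)
  rwa [preimage_add_const_Ioi, sub_self] at h

theorem integral_Ioi_comp_add [NormedSpace ℝ E] (f : ℝ → E) (a : ℝ) :
    ∫ x in Ioi 0, f (x + a) = ∫ x in Ioi a, f x := by
  simpa using (measurePreserving_add_right volume a).setIntegral_preimage_emb
    (measurableEmbedding_addRight a) f (Ioi a)

end Translation

section Laplace

variable {l : ℝ}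

def LapIntegrable (p : ℝ → ℝ) (l : ℝ) : Prop :=
  IntegrableOn (fun x => exp (-l * x) * p x) (Ioi 0)

theorem lapIntegrable_pow (hl : 0 < l) (n : ℕ) : LapIntegrable (fun t => t ^ n) l := by
  refine (integrableOn_rpow_mul_exp_neg_mul_rpow (s := n) (by linarith [n.cast_nonneg (α := ℝ)])
    zero_lt_one hl).congr_fun (fun x _ => ?_) measurableSet_Ioi
  simp [mul_comm]

theorem lap_pow (hl : 0 < l) (n : ℕ) :
    lap (fun t => t ^ n) l = (n.factorial : ℝ) / l ^ (n + 1) := by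
  have h := integral_rpow_mul_exp_neg_mul_Ioi (a := n + 1) (by positivity) hl
  rw [add_sub_cancel_right, Gamma_nat_eq_factorial] at h
  calc lap (fun t => t ^ n) l = ∫ t in Ioi 0, t ^ (n : ℝ) * exp (-(l * t)) :=
        setIntegral_congr_fun measurableSet_Ioi fun x _ => by simp [mul_comm]
    _ = (n.factorial : ℝ) / l ^ (n + 1) := by
        rw [h, ← Nat.cast_add_one, rpow_natCast, one_div_pow, one_div_mul_eq_div]

theorem lap_sub_const_mul {p r : ℝ → ℝ} (hp : LapIntegrable p l) (hr : LapIntegrable r l) (c : ℝ) :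
    lap (fun t => p t - c * r t) l = lap p l - c * lap r l := by
  simp only [lap, mul_sub, mul_left_comm _ c]
  rw [integral_sub hp (hr.const_mul c), integral_const_mul]

theorem exp_neg_mul_mul_indicator (s : Set ℝ) (g : ℝ → ℝ) :
    (fun x => exp (-l * x) * s.indicator g x) = s.indicator (fun x => exp (-l * x) * g x) :=
  funext fun _ => (indicator_mul_right s (fun x => exp (-l * x)) g).symm

theorem lapIntegrable_indicator_Ici {a : ℝ} {g : ℝ → ℝ}
    (hg : LapIntegrable (fun t => g (t + a)) l) :
    LapIntegrable ((Ici a).indicator g) l := by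
  have h : IntegrableOn (fun x => exp (-l * x) * g x) (Ioi a) := by
    rw [← integrableOn_Ioi_comp_add_iff]
    refine IntegrableOn.congr_fun (hg.const_mul (exp (-l * a))) (fun x _ => ?_) measurableSet_Ioi
    rw [← mul_assoc, ← exp_add]; ring_nf
  rw [LapIntegrable, exp_neg_mul_mul_indicator]
  exact ((integrable_indicator_iff measurableSet_Ici).2
    ((integrableOn_Ici_iff_integrableOn_Ioi enorm_ne_top).2 h)).integrableOn

theorem lap_indicator_Ici {a : ℝ} (ha : 0 < a) (g : ℝ → ℝ) :
    lap ((Ici a).indicator g) l = exp (-l * a) * lap (fun t => g (t + a)) l := by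
  simp only [lap]
  rw [exp_neg_mul_mul_indicator, setIntegral_indicator measurableSet_Ici,
    inter_eq_self_of_subset_right (Ici_subset_Ioi.2 ha), integral_Ici_eq_integral_Ioi,
    ← integral_Ioi_comp_add, ← integral_const_mul]
  congr 1 with x
  rw [← mul_assoc, ← exp_add]; ring_nf

theorem sq_sub_two_mul_indicator_Ici_one :
    (fun t : ℝ => (t - 2 * (Ici 1).indicator 1 t) ^ 2)
      = fun t => t ^ 2 - 4 * (Ici 1).indicator (fun t => t - 1) t := by
  funext t
  by_cases ht : t ∈ Ici (1 : ℝ)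
  · simp only [indicator_of_mem ht, Pi.one_apply]; ring
  · simp [indicator_of_notMem ht]

end Laplace

theorem stmt15 :
    (∀ l > (0:ℝ),
        lap (fun t => t ^ 2) l
            * lap (fun t => t - 2 * Set.indicator (Set.Ici (1:ℝ)) (1 : ℝ → ℝ) t) l
          = lap (fun t => t) l
            * lap (fun t => (t - 2 * Set.indicator (Set.Ici (1:ℝ)) (1 : ℝ → ℝ) t) ^ 2) l) ∧
      (fun t : ℝ => t) ≠ fun t => t - 2 * Set.indicator (Set.Ici (1:ℝ)) (1 : ℝ → ℝ) t := by
  refine ⟨fun l hl => ?_, fun h => absurd (congrFun h 1) (by norm_num)⟩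
  have hid : LapIntegrable (fun t => t) l := by simpa using lapIntegrable_pow hl 1
  have hlap_one : lap (fun _ => 1) l = 1 / l := by simpa using lap_pow hl 0
  have hlap_id : lap (fun t => t) l = 1 / l ^ 2 := by simpa using lap_pow hl 1
  rw [lap_sub_const_mul hid (lapIntegrable_indicator_Ici (by simpa using lapIntegrable_pow hl 0)),
    sq_sub_two_mul_indicator_Ici_one,
    lap_sub_const_mul (lapIntegrable_pow hl 2) (lapIntegrable_indicator_Ici (by simpa using hid)),
    lap_indicator_Ici one_pos, lap_indicator_Ici one_pos]
  simp only [Pi.one_apply, add_sub_cancel_right, lap_pow hl, hlap_one, hlap_id]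
  norm_num [Nat.factorial]
  field_simp
  ring
end

section
/- Let p(t) = e^t for t ≥ 0 and q(t) = e^t for t ∈ [0,1) and q(t) = (e^{-1} − 1)e^t for t ≥ 1. Then for all sufficiently large λ, ∫₀^∞ e^{-λt} p(t)² dt / ∫₀^∞ e^{-λt} p(t) dt = ∫₀^∞ e^{-λt} q(t)² dt / ∫₀^∞ e^{-λt} q(t) dt, even though p ≠ q. -/
/-!
For `k < λ` and `c`, splitting `∫₀^∞ e^{-λt} (e^{kt} or c e^{kt})` at the jump `t = a` gives
`(1 + (c - 1) e^{(k-λ)a}) / (λ - k)`. Hence, with `D = 1 + (c - 1) e^{1-λ}`, `lap q λ = D / (λ - 1)` and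
`lap q² λ = (1 + (c² - 1) e^{2-λ}) / (λ - 2)`, and `c + 1 = e⁻¹` makes the second numerator equal `D` too:
both ratios are `(λ - 1) / (λ - 2)`.
-/

open MeasureTheory Real Set Filter Asymptotics

lemma setIntegral_Ioi_exp_mul {b : ℝ} (hb : b < 0) (a : ℝ) :
    ∫ x in Ioi a, exp (b * x) = exp (b * a) / -b := by
  rw [integral_exp_mul_Ioi hb, neg_div, div_neg]

lemma exp_neg_mul_mul_exp_mul (k l x : ℝ) :
    exp (-l * x) * exp (k * x) = exp ((k - l) * x) := by
  rw [← exp_add]; ring_nf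

lemma lap_exp_mul {k l : ℝ} (hkl : k < l) : lap (fun t => exp (k * t)) l = 1 / (l - k) := by
  simp only [lap, exp_neg_mul_mul_exp_mul]
  rw [setIntegral_Ioi_exp_mul (by linarith), mul_zero, exp_zero, neg_sub]

lemma lap_piecewise_exp_mul {a k l : ℝ} (c : ℝ) (ha : 0 ≤ a) (hkl : k < l) :
    lap (fun t => if t < a then exp (k * t) else c * exp (k * t)) l
      = (1 + (c - 1) * exp ((k - l) * a)) / (l - k) := by
  have hb : k - l < 0 := by linarith
  have hsplit : ∀ t, exp (-l * t) * (if t < a then exp (k * t) else c * exp (k * t))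
      = exp ((k - l) * t) + (c - 1) * (Ici a).indicator (fun t => exp ((k - l) * t)) t := by
    intro t
    by_cases ht : t < a
    · simp only [ht, if_true, exp_neg_mul_mul_exp_mul, indicator_of_notMem (notMem_Ici.2 ht),
        mul_zero, add_zero]
    · simp only [ht, if_false, indicator_of_mem (mem_Ici.2 (not_lt.1 ht)),
        ← exp_neg_mul_mul_exp_mul k l t]
      ring
  have htail : (Ioi 0 ∩ Ici a : Set ℝ) =ᵐ[volume] Ioi a := by
    have h := (ae_eq_refl (Ioi (0 : ℝ))).inter (Ioi_ae_eq_Ici (a := a) (μ := volume)).symm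
    rwa [Ioi_inter_Ioi, max_eq_right ha] at h
  simp only [lap, hsplit]
  rw [integral_add (integrableOn_exp_mul_Ioi hb 0)
      (((integrableOn_exp_mul_Ioi hb 0).indicator measurableSet_Ici).const_mul _),
    integral_const_mul, setIntegral_indicator measurableSet_Ici, setIntegral_congr_set htail,
    setIntegral_Ioi_exp_mul hb, setIntegral_Ioi_exp_mul hb, mul_zero, exp_zero, neg_sub]
  ring

theorem stmt16 :
    (∃ Λ : ℝ, ∀ l ≥ Λ,
        lap (fun t => Real.exp t ^ 2) l / lap (fun t => Real.exp t) l
          = lap (fun t => (if t < 1 then Real.exp t else (Real.exp (-1) - 1) * Real.exp t) ^ 2) l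
            / lap (fun t => if t < 1 then Real.exp t else (Real.exp (-1) - 1) * Real.exp t) l) ∧
      (fun t : ℝ => Real.exp t)
        ≠ fun t => if t < 1 then Real.exp t else (Real.exp (-1) - 1) * Real.exp t := by
  set c : ℝ := exp (-1) - 1 with hc
  have hexp_sq : ∀ t, exp t ^ 2 = exp (2 * t) := fun t => by rw [← exp_nat_mul]; norm_num
  constructor
  · refine ⟨3, fun l hl => ?_⟩
    have hp := lap_exp_mul (k := 1) (l := l) (by linarith)
    have hp2 := lap_exp_mul (k := 2) (l := l) (by linarith)
    have hq := lap_piecewise_exp_mul (k := 1) (l := l) c zero_le_one (by linarith)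
    have hq2 := lap_piecewise_exp_mul (k := 2) (l := l) (c ^ 2) zero_le_one (by linarith)
    simp only [one_mul, mul_one] at hp hq hq2
    simp only [ite_pow, mul_pow, hexp_sq]
    rw [hp, hp2, hq, hq2]
    have hjump : (c ^ 2 - 1) * exp (2 - l) = (c - 1) * exp (1 - l) := by
      rw [show c ^ 2 - 1 = (c - 1) * exp (-1) by rw [hc]; ring, mul_assoc, ← exp_add]
      ring_nf
    have hpos : 0 < 1 + (c - 1) * exp (1 - l) := by
      have hu : exp (1 - l) ≤ exp (-1) := exp_le_exp.2 (by linarith)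
      nlinarith [exp_pos (1 - l), exp_pos (-1), exp_neg_one_lt_half]
    rw [hjump]
    field_simp
  · intro h
    have h1 := congrFun h 1
    simp only [lt_irrefl, if_false] at h1
    nlinarith [exp_pos 1, exp_neg_one_lt_half]
end

section
/- Let a ≠ 0 be a real number, T > 0, c ∈ ℝ satisfy c^n − c^m = e^{−naT} − e^{−maT} with n > m ≥ 1 integers. Define p(t) = e^{−at}(1_{[0,T)}(t) + c e^{aT} 1_{[T,∞)}(t)) and f(t) = e^{−at}. Then for all sufficiently large λ, ∫₀^∞ e^{-λt} p(t)^n dt / ∫₀^∞ e^{-λt} p(t)^m dt = (λ + ma)/(λ + na) = ∫₀^∞ e^{-λt} f(t)^n dt / ∫₀^∞ e^{-λt} f(t)^m dt. -/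
/-!
On `t ≥ 0`, `p t ^ k = e^{-kat} (1 + (c^k e^{kaT} - 1) 1_{[T,∞)}(t))`, so that
`lap (p ^ k) λ = (1 + (c^k - e^{-kaT}) e^{-λT}) / (λ + ka)`. The hypothesis on `c` says exactly
that the factor `1 + (c^k - e^{-kaT}) e^{-λT}` is the same for `k = n` and `k = m`; it tends
to `1`, so for large `λ` it is nonzero and cancels in the ratio, leaving the ratio
`(λ + ma) / (λ + na)` of the transforms of `f ^ n` and `f ^ m`.
-/

open MeasureTheory Real Set Filter Asymptotics
open scoped Topology

lemma lap_congr {p q : ℝ → ℝ} (h : EqOn p q (Ioi 0)) (l : ℝ) : lap p l = lap q l :=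
  setIntegral_congr_fun measurableSet_Ioi fun _ hx => by simp only [h hx]

lemma integrableOn_exp_neg_mul_Ioi {b : ℝ} (hb : 0 < b) (s : ℝ) :
    IntegrableOn (fun t => exp (-b * t)) (Ioi s) :=
  integrableOn_exp_mul_Ioi (neg_neg_iff_pos.2 hb) s

lemma integral_exp_neg_mul_Ioi {b : ℝ} (hb : 0 < b) (s : ℝ) :
    ∫ t in Ioi s, exp (-b * t) = exp (-b * s) / b := by
  rw [integral_exp_mul_Ioi (neg_neg_iff_pos.2 hb), neg_div_neg_eq]

lemma exp_neg_mul_mul_exp_neg_mul (l b t : ℝ) :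
    exp (-l * t) * exp (-b * t) = exp (-(l + b) * t) := by
  rw [← exp_add]; ring_nf

lemma exp_neg_mul_pow (a t : ℝ) (k : ℕ) : exp (-a * t) ^ k = exp (-(k * a) * t) := by
  rw [← exp_nat_mul]; ring_nf

lemma lap_exp_neg_mul {b l : ℝ} (h : 0 < l + b) :
    lap (fun t => exp (-b * t)) l = 1 / (l + b) := by
  simp only [lap, exp_neg_mul_mul_exp_neg_mul, integral_exp_neg_mul_Ioi h, mul_zero, exp_zero]

lemma lap_exp_neg_mul_step {b l B T : ℝ} (hT : 0 < T) (h : 0 < l + b) :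
    lap (fun t => exp (-b * t) * (1 + B * (Ici T).indicator 1 t)) l
      = (1 + B * exp (-(l + b) * T)) / (l + b) := by
  have hsplit : ∀ t, exp (-l * t) * (exp (-b * t) * (1 + B * (Ici T).indicator 1 t))
      = exp (-(l + b) * t) + B * (Ici T).indicator (fun t => exp (-(l + b) * t)) t := by
    intro t
    by_cases ht : t ∈ Ici T
    · simp only [indicator_of_mem ht, Pi.one_apply, ← exp_neg_mul_mul_exp_neg_mul]; ring
    · simp only [indicator_of_notMem ht, ← exp_neg_mul_mul_exp_neg_mul]; ring
  have hint := integrableOn_exp_neg_mul_Ioi h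
  have hIci : Ici T ∩ Ioi 0 = Ici T := inter_eq_left.2 (Ici_subset_Ioi.2 hT)
  simp only [lap, hsplit]
  rw [integral_add (hint 0) (((hint 0).indicator measurableSet_Ici).const_mul B),
    integral_const_mul, integral_indicator measurableSet_Ici, Measure.restrict_restrict
    measurableSet_Ici, hIci, integral_Ici_eq_integral_Ioi, integral_exp_neg_mul_Ioi h,
    integral_exp_neg_mul_Ioi h]
  simp only [mul_zero, exp_zero]
  ring

lemma pow_exp_neg_mul_step {a T c t : ℝ} (ht : 0 ≤ t) (k : ℕ) :
    (exp (-a * t) * ((Ico 0 T).indicator 1 t + c * exp (a * T) * (Ici T).indicator 1 t)) ^ k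
      = exp (-(k * a) * t) * (1 + (c ^ k * exp (k * a * T) - 1) * (Ici T).indicator 1 t) := by
  rw [← exp_neg_mul_pow]
  by_cases htT : T ≤ t
  · have hIco : t ∉ Ico 0 T := fun h => (not_lt.2 htT) h.2
    simp only [indicator_of_notMem hIco, indicator_of_mem (mem_Ici.2 htT), Pi.one_apply]
    rw [show exp (k * a * T) = exp (a * T) ^ k by rw [← exp_nat_mul]; ring_nf]
    ring
  · have hIco : t ∈ Ico 0 T := ⟨ht, not_le.1 htT⟩
    have hIci : t ∉ Ici T := htT
    simp [indicator_of_notMem hIci, indicator_of_mem hIco]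

lemma lap_pow_exp_neg_mul {a l : ℝ} (k : ℕ) (hk : 0 < l + k * a) :
    lap (fun t => exp (-a * t) ^ k) l = 1 / (l + k * a) := by
  simp only [exp_neg_mul_pow]
  exact lap_exp_neg_mul hk

lemma lap_pow_exp_neg_mul_step {a T c l : ℝ} (hT : 0 < T) (k : ℕ) (hk : 0 < l + k * a) :
    lap (fun t => (exp (-a * t) *
        ((Ico 0 T).indicator 1 t + c * exp (a * T) * (Ici T).indicator 1 t)) ^ k) l
      = (1 + (c ^ k - exp (-(k : ℝ) * a * T)) * exp (-l * T)) / (l + k * a) := by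
  rw [lap_congr (fun t ht => pow_exp_neg_mul_step (le_of_lt ht) k), lap_exp_neg_mul_step hT hk]
  have hE : exp (-(k : ℝ) * a * T) = (exp (k * a * T))⁻¹ := by rw [← exp_neg]; ring_nf
  have hlE : exp (-(l + k * a) * T) = exp (-l * T) * (exp (k * a * T))⁻¹ := by
    rw [← exp_neg, ← exp_add]; ring_nf
  rw [hE, hlE]
  field_simp

lemma eventually_one_add_mul_exp_neg_mul_pos (D : ℝ) {T : ℝ} (hT : 0 < T) :
    ∀ᶠ l in atTop, 0 < 1 + D * exp (-l * T) := by
  have hexp : Tendsto (fun l => exp (-l * T)) atTop (𝓝 0) :=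
    tendsto_exp_atBot.comp (tendsto_neg_atTop_atBot.atBot_mul_const hT)
  have hlim : Tendsto (fun l => 1 + D * exp (-l * T)) atTop (𝓝 1) := by
    simpa using (hexp.const_mul D).const_add 1
  exact hlim.eventually (lt_mem_nhds one_pos)

theorem stmt17_general (a : ℝ) (T : ℝ) (hT : 0 < T)
    (n m : ℕ)
    (c : ℝ)
    (hc : c ^ n - c ^ m = Real.exp (-(n : ℝ) * a * T) - Real.exp (-(m : ℝ) * a * T))
    (p f : ℝ → ℝ)
    (hp : ∀ t, p t = Real.exp (-a * t) *
        (Set.indicator (Set.Ico (0:ℝ) T) (1 : ℝ → ℝ) t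
          + c * Real.exp (a * T) * Set.indicator (Set.Ici T) (1 : ℝ → ℝ) t))
    (hf : ∀ t, f t = Real.exp (-a * t)) :
    ∃ Λ : ℝ, ∀ l ≥ Λ,
      lap (fun t => p t ^ n) l / lap (fun t => p t ^ m) l = (l + m * a) / (l + n * a) ∧
      (l + m * a) / (l + n * a)
        = lap (fun t => f t ^ n) l / lap (fun t => f t ^ m) l := by
  obtain rfl : p = _ := funext hp
  obtain rfl : f = _ := funext hf
  have hnm : c ^ n - exp (-(n : ℝ) * a * T) = c ^ m - exp (-(m : ℝ) * a * T) := by linarith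
  have hpos : ∀ b : ℝ, ∀ᶠ l in atTop, 0 < l + b := fun b =>
    (eventually_gt_atTop (-b)).mono fun l hl => by linarith
  obtain ⟨Λ, hΛ⟩ := eventually_atTop.1
    ((eventually_one_add_mul_exp_neg_mul_pos (c ^ m - exp (-(m : ℝ) * a * T)) hT).and
      ((hpos (n * a)).and (hpos (m * a))))
  refine ⟨Λ, fun l hl => ?_⟩
  obtain ⟨hDl, hln, hlm⟩ := hΛ l hl
  rw [lap_pow_exp_neg_mul_step hT n hln, lap_pow_exp_neg_mul_step hT m hlm, hnm,
    lap_pow_exp_neg_mul n hln, lap_pow_exp_neg_mul m hlm]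
  exact ⟨div_div_div_cancel_left' _ _ hDl.ne',
    (div_div_div_cancel_left' _ _ one_ne_zero).symm⟩

theorem stmt17 (a : ℝ) (ha : a ≠ 0) (T : ℝ) (hT : 0 < T)
    (n m : ℕ) (hm : 1 ≤ m) (hmn : m < n)
    (c : ℝ)
    (hc : c ^ n - c ^ m = Real.exp (-(n : ℝ) * a * T) - Real.exp (-(m : ℝ) * a * T))
    (p f : ℝ → ℝ)
    (hp : ∀ t, p t = Real.exp (-a * t) *
        (Set.indicator (Set.Ico (0:ℝ) T) (1 : ℝ → ℝ) t
          + c * Real.exp (a * T) * Set.indicator (Set.Ici T) (1 : ℝ → ℝ) t))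
    (hf : ∀ t, f t = Real.exp (-a * t)) :
    ∃ Λ : ℝ, ∀ l ≥ Λ,
      lap (fun t => p t ^ n) l / lap (fun t => p t ^ m) l = (l + m * a) / (l + n * a) ∧
      (l + m * a) / (l + n * a)
        = lap (fun t => f t ^ n) l / lap (fun t => f t ^ m) l :=
  stmt17_general a T hT n m c hc p f hp hf
end

section
/- Let n > m ≥ 1 be integers, a > 0, b₀ = (m/n)^{1/(n−m)} and T₂ = (1/((n−m)a)) ln(n/m). Define p(t) = e^{−at} 1_{[0,T₂)}(t) + b₀ 1_{[T₂,∞)}(t) and f(t) = e^{−at}. Then b₀^n − b₀^m = e^{−naT₂} − e^{−maT₂} and n b₀^{n−m} = m, and for all sufficiently large λ, ∫₀^∞ e^{-λt} p(t)^n dt / ∫₀^∞ e^{-λt} p(t)^m dt = (λ + ma)/(λ + na). -/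
/-! Since `b₀ = e^{-aT₂}`, the function `p` is the continuous function that follows `e^{-at}` up to
`T₂` and then freezes, so `p^k` decays like `e^{-kat}` and then stays at `e^{-kaT₂}`. The Laplace
transform of such a function is `(λ + ka e^{-(λ+ka)T₂}) / (λ(λ + ka))`. The choice of `T₂` makes
`b₀` the critical point of `x^n - x^m`, i.e. `n e^{-naT₂} = m e^{-maT₂}`, so the numerators for
`k = n` and `k = m` coincide and cancel in the quotient, for every `λ > 0`. -/

open MeasureTheory Real Set Filter Asymptotics

lemma rpow_one_div_eq_exp_neg {r s u : ℝ} (hr : 0 < r) (hs : s ≠ 0) (h : s * u = log r⁻¹) :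
    r ^ (1 / s) = exp (-u) := by
  rw [rpow_def_of_pos hr, log_inv] at *
  congr 1
  field_simp
  linarith

lemma mul_exp_neg_mul_eq_of_sub_mul_eq_log {x y u : ℝ} (hx : 0 < x) (hy : 0 < y)
    (h : (y - x) * u = log (y / x)) : y * exp (-(y * u)) = x * exp (-(x * u)) := by
  have hsplit : exp (-(y * u)) = exp (-(x * u)) * exp (-((y - x) * u)) := by
    rw [← exp_add]; ring_nf
  rw [hsplit, h, exp_neg (log _), exp_log (div_pos hy hx), inv_div]
  field_simp

lemma integral_Ioo_exp_neg_mul {c T : ℝ} (hc : c ≠ 0) (hT : 0 ≤ T) :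
    ∫ t in Ioo 0 T, exp (-c * t) = (1 - exp (-c * T)) / c := by
  rw [← integral_Ioc_eq_integral_Ioo, ← intervalIntegral.integral_of_le hT,
    intervalIntegral.integral_comp_mul_left (fun t => exp t) (neg_ne_zero.mpr hc), mul_zero,
    integral_exp, exp_zero, smul_eq_mul]
  field_simp
  ring

lemma integral_Ici_exp_neg_mul {l T : ℝ} (hl : 0 < l) :
    ∫ t in Ici T, exp (-l * t) = exp (-l * T) / l := by
  simp only [integral_Ici_eq_integral_Ioi, neg_mul]
  rw [integral_comp_mul_left_Ioi (fun t => exp (-t)) T hl, integral_exp_neg_Ioi, smul_eq_mul]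
  field_simp

lemma lap_eq_of_eqOn_exp_then_const {g : ℝ → ℝ} {c T l : ℝ} (hT : 0 < T) (hl : 0 < l)
    (hc : 0 < l + c) (h_before : EqOn g (fun t => exp (-c * t)) (Ioo 0 T))
    (h_after : EqOn g (fun _ => exp (-c * T)) (Ici T)) :
    lap g l = (l + c * exp (-(l + c) * T)) / (l * (l + c)) := by
  have h_before' : EqOn (fun t => exp (-l * t) * g t) (fun t => exp (-(l + c) * t)) (Ioo 0 T) :=
    fun t ht => by simp only [h_before ht, ← exp_add]; ring_nf
  have h_after' : EqOn (fun t => exp (-l * t) * g t)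
      (fun t => exp (-c * T) * exp (-l * t)) (Ici T) :=
    fun t ht => by simp only [h_after ht]; ring
  have hint_before : IntegrableOn (fun t => exp (-l * t) * g t) (Ioo 0 T) :=
    ((continuous_exp.comp (continuous_const.mul continuous_id)).integrableOn_Icc.mono_set
      Ioo_subset_Icc_self).congr_fun h_before'.symm measurableSet_Ioo
  have hint_after : IntegrableOn (fun t => exp (-l * t) * g t) (Ici T) := by
    refine IntegrableOn.congr_fun ?_ h_after'.symm measurableSet_Ici
    rw [integrableOn_Ici_iff_integrableOn_Ioi]
    exact (exp_neg_integrableOn_Ioi T hl).const_mul _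
  have hdisj : Disjoint (Ioo 0 T) (Ici T) :=
    disjoint_left.mpr fun _ h h' => (not_le.mpr h.2) h'
  rw [lap, ← Ioo_union_Ici_eq_Ioi hT, setIntegral_union hdisj measurableSet_Ici hint_before
      hint_after, setIntegral_congr_fun measurableSet_Ioo h_before',
    setIntegral_congr_fun measurableSet_Ici h_after', integral_Ioo_exp_neg_mul hc.ne' hT.le,
    integral_const_mul, integral_Ici_exp_neg_mul hl]
  have hexp : exp (-(l + c) * T) = exp (-c * T) * exp (-l * T) := by
    rw [← exp_add]; ring_nf
  rw [hexp]
  field_simp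
  ring

theorem stmt18 (n m : ℕ) (hm : 1 ≤ m) (hmn : m < n) (a : ℝ) (ha : 0 < a)
    (b₀ T₂ : ℝ)
    (hb₀ : b₀ = ((m : ℝ) / n) ^ ((1 : ℝ) / ((n : ℝ) - m)))
    (hT₂ : T₂ = (1 / (((n : ℝ) - m) * a)) * Real.log ((n : ℝ) / m))
    (p : ℝ → ℝ)
    (hp : ∀ t, p t = Real.exp (-a * t) * Set.indicator (Set.Ico (0:ℝ) T₂) (1 : ℝ → ℝ) t
        + b₀ * Set.indicator (Set.Ici T₂) (1 : ℝ → ℝ) t) :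
    b₀ ^ n - b₀ ^ m = Real.exp (-(n : ℝ) * a * T₂) - Real.exp (-(m : ℝ) * a * T₂) ∧
      (n : ℝ) * b₀ ^ (n - m) = m ∧
      ∃ Λ : ℝ, ∀ l ≥ Λ,
        lap (fun t => p t ^ n) l / lap (fun t => p t ^ m) l = (l + m * a) / (l + n * a) := by
  have hm0 : (0 : ℝ) < m := by exact_mod_cast hm
  have hmn' : (m : ℝ) < n := by exact_mod_cast hmn
  have hn0 : (0 : ℝ) < n := hm0.trans hmn'
  have hlog : ((n : ℝ) - m) * (a * T₂) = log (n / m) := by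
    rw [hT₂]; field_simp [(sub_pos.mpr hmn').ne']
  have hT₂pos : 0 < T₂ := by
    rw [hT₂]; exact mul_pos (by bound) (log_pos ((one_lt_div hm0).mpr hmn'))
  have hb₀exp : b₀ = exp (-(a * T₂)) := by
    rw [hb₀, rpow_one_div_eq_exp_neg (div_pos hm0 hn0) (sub_pos.mpr hmn').ne' (by rwa [inv_div])]
  have hpow (k : ℕ) : b₀ ^ k = exp (-(k * a) * T₂) := by
    rw [hb₀exp, ← exp_nat_mul]; ring_nf
  have hcrit : (n : ℝ) * b₀ ^ n = m * b₀ ^ m := by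
    simpa only [hpow, neg_mul, mul_assoc] using mul_exp_neg_mul_eq_of_sub_mul_eq_log hm0 hn0 hlog
  have hp_before : EqOn p (fun t => exp (-a * t)) (Ioo 0 T₂) := fun t ht => by
    simp [hp, ht.1.le, ht.2, not_le.mpr ht.2]
  have hp_after : EqOn p (fun _ => b₀) (Ici T₂) := fun t (ht : T₂ ≤ t) => by
    simp [hp, ht, not_lt.mpr ht]
  have hlap (k : ℕ) {l : ℝ} (hl : 0 < l) :
      lap (fun t => p t ^ k) l = (l + a * exp (-l * T₂) * (k * b₀ ^ k)) / (l * (l + k * a)) := by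
    rw [lap_eq_of_eqOn_exp_then_const (c := k * a) hT₂pos hl (by positivity)
      (fun t ht => by simp only [hp_before ht, ← exp_nat_mul]; ring_nf)
      (fun t ht => by simp only [hp_after ht, hpow]), hpow]
    simp only [neg_mul, add_mul, neg_add, exp_add]
    ring
  refine ⟨by simp only [hpow, neg_mul], ?_, 1, fun l hl => ?_⟩
  · have hbm : b₀ ^ m ≠ 0 := by rw [hpow]; exact (exp_pos _).ne'
    rw [← mul_left_inj' hbm, mul_assoc, ← pow_add, Nat.sub_add_cancel hmn.le, hcrit]
  · have hl0 : 0 < l := one_pos.trans_le hl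
    have hnum : 0 < l + a * exp (-l * T₂) * (m * b₀ ^ m) := by rw [hb₀exp]; positivity
    rw [hlap n hl0, hlap m hl0, hcrit, div_div_div_cancel_left' _ _ hnum.ne',
      mul_div_mul_left _ _ hl0.ne']
end
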